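/- Let h₁ ≤ ⋯ ≤ h_N be sorted reals, 0 < α < β < 1, N_γ = ⌊γN⌋ for γ = α, β. For reals ξ⁻_α ≤ ξ⁺_α ≤ ξ⁻_β ≤ ξ⁺_β, define Δξ_α = ξ⁺_α − ξ⁻_α, Δξ_β = ξ⁺_β − ξ⁻_β, Ṅ⁺_α = #{i : hᵢ < ξ⁺_α}, N⁻_β = #{i : hᵢ ≤ ξ⁻_β}. Then Σ_{i=N_α+1}^{N_β} hᵢ = Σ_{i=1}^N 1{ξ⁺_α ≤ hᵢ ≤ ξ⁻_β}·hᵢ + ξ⁺_α(Ṅ⁺_α − N_α) − ξ⁻_β(N⁻_β − N_β) − Δξ_α·1{N_α < Ṅ⁺_α}·(Ṅ⁺_α − N_α) − Δξ_β·1{N⁻_β < N_β}·(N⁻_β − N_β) + 𝕃_α + 𝕃_β, where 𝕃_α = 1{N_α < Ṅ⁺_α}·Σ_{i=N_α+1}^{Ṅ⁺_α}(hᵢ − ξ⁻_α) − 1{Ṅ⁺_α ≤ N_α}·Σ_{i=Ṅ⁺_α+1}^{N_α}(hᵢ − ξ⁺_α) and 𝕃_β = 1{N⁻_β ≤ N_β}·Σ_{i=N⁻_β+1}^{N_β}(hᵢ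 − ξ⁺_β) − 1{N_β < N⁻_β}·Σ_{i=N_β+1}^{N⁻_β}(hᵢ − ξ⁻_β). -/
import Mathlib


open Finset

/-- A downward-closed finset of positive naturals is an initial segment. -/
lemma initial_segment (T : Finset ℕ) (hT : ∀ i ∈ T, 1 ≤ i)
    (hdc : ∀ i ∈ T, ∀ j, 1 ≤ j → j ≤ i → j ∈ T) : T = Finset.Icc 1 T.card := by
  rcases T.eq_empty_or_nonempty with rfl | hne
  · simp
  · have hmax := T.max'_mem hne
    have hsub : T ⊆ Finset.Icc 1 (T.max' hne) := fun i hi =>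
      Finset.mem_Icc.mpr ⟨hT i hi, T.le_max' i hi⟩
    have hsup : Finset.Icc 1 (T.max' hne) ⊆ T := by
      intro j hj
      rw [Finset.mem_Icc] at hj
      exact hdc _ hmax j hj.1 hj.2
    have hEq : T = Finset.Icc 1 (T.max' hne) := Finset.Subset.antisymm hsub hsup
    have hcard : T.card = T.max' hne := by
      conv_lhs => rw [hEq]
      rw [Nat.card_Icc]
      omega
    rw [hcard]
    exact hEq

lemma sum_sub_const (h : ℕ → ℝ) (c : ℝ) (a b : ℕ) (hab : a ≤ b) :
    ∑ i ∈ Finset.Ioc a b, (h i - c) = (∑ i ∈ Finset.Ioc a b, h i) - ((b : ℝ) - a) * c := by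
  rw [Finset.sum_sub_distrib, Finset.sum_const, Nat.card_Ioc, nsmul_eq_mul,
    Nat.cast_sub hab]

/-- Lemma 2.1 of Borovskikh–Weber (deterministic identity). For sorted reals
`h 1 ≤ ⋯ ≤ h N` (1-based), `0 < α < β < 1`, `N_γ = ⌊γN⌋`, quantile values
`ξ⁻_α ≤ ξ⁺_α ≤ ξ⁻_β ≤ ξ⁺_β`, `Ṅ⁺_α = #{i : hᵢ < ξ⁺_α}`,
`N⁻_β = #{i : hᵢ ≤ ξ⁻_β}`:
`Σ_{i=N_α+1}^{N_β} hᵢ = Σ_{i=1}^N 1{ξ⁺_α ≤ hᵢ ≤ ξ⁻_β} hᵢ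
  + ξ⁺_α(Ṅ⁺_α − N_α) − ξ⁻_β(N⁻_β − N_β)
  − Δξ_α 1{N_α < Ṅ⁺_α}(Ṅ⁺_α − N_α) − Δξ_β 1{N⁻_β < N_β}(N⁻_β − N_β)
  + 𝕃_α + 𝕃_β`. -/
theorem trimmed_sum_representation (N : ℕ) (h : ℕ → ℝ)
    (hmono : MonotoneOn h (Set.Icc 1 N)) (α β : ℝ)
    (hα : 0 < α) (hαβ : α < β) (hβ : β < 1)
    (ξmα ξpα ξmβ ξpβ : ℝ)
    (h1 : ξmα ≤ ξpα) (h2 : ξpα ≤ ξmβ) (h3 : ξmβ ≤ ξpβ)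
    (Nα Nβ Ndotpα Nmβ : ℕ)
    (hNα : Nα = ⌊α * N⌋₊) (hNβ : Nβ = ⌊β * N⌋₊)
    (hNdot : Ndotpα = ((Finset.Icc 1 N).filter (fun i => h i < ξpα)).card)
    (hNm : Nmβ = ((Finset.Icc 1 N).filter (fun i => h i ≤ ξmβ)).card) :
    ∑ i ∈ Finset.Ioc Nα Nβ, h i =
      (∑ i ∈ Finset.Icc 1 N, if ξpα ≤ h i ∧ h i ≤ ξmβ then h i else 0)
      + ξpα * ((Ndotpα : ℝ) - Nα) - ξmβ * ((Nmβ : ℝ) - Nβ)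
      - (ξpα - ξmα) * (if Nα < Ndotpα then (1 : ℝ) else 0) * ((Ndotpα : ℝ) - Nα)
      - (ξpβ - ξmβ) * (if Nmβ < Nβ then (1 : ℝ) else 0) * ((Nmβ : ℝ) - Nβ)
      + ((if Nα < Ndotpα then (1 : ℝ) else 0) * ∑ i ∈ Finset.Ioc Nα Ndotpα, (h i - ξmα)
         - (if Ndotpα ≤ Nα then (1 : ℝ) else 0) * ∑ i ∈ Finset.Ioc Ndotpα Nα, (h i - ξpα))
      + ((if Nmβ ≤ Nβ then (1 : ℝ) else 0) * ∑ i ∈ Finset.Ioc Nmβ Nβ, (h i - ξpβ)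
         - (if Nβ < Nmβ then (1 : ℝ) else 0) * ∑ i ∈ Finset.Ioc Nβ Nmβ, (h i - ξmβ)) := by
  -- the filter sets are initial segments
  have hAset : ((Finset.Icc 1 N).filter (fun i => h i < ξpα)) = Finset.Icc 1 Ndotpα := by
    rw [hNdot]
    apply initial_segment
    · intro i hi
      exact (Finset.mem_Icc.mp (Finset.mem_filter.mp hi).1).1
    · intro i hi j hj1 hji
      rw [Finset.mem_filter, Finset.mem_Icc] at hi ⊢
      refine ⟨⟨hj1, le_trans hji hi.1.2⟩, lt_of_le_of_lt ?_ hi.2⟩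
      exact hmono ⟨hj1, le_trans hji hi.1.2⟩ ⟨hi.1.1, hi.1.2⟩ hji
  have hBset : ((Finset.Icc 1 N).filter (fun i => h i ≤ ξmβ)) = Finset.Icc 1 Nmβ := by
    rw [hNm]
    apply initial_segment
    · intro i hi
      exact (Finset.mem_Icc.mp (Finset.mem_filter.mp hi).1).1
    · intro i hi j hj1 hji
      rw [Finset.mem_filter, Finset.mem_Icc] at hi ⊢
      refine ⟨⟨hj1, le_trans hji hi.1.2⟩, le_trans ?_ hi.2⟩
      exact hmono ⟨hj1, le_trans hji hi.1.2⟩ ⟨hi.1.1, hi.1.2⟩ hji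
  have hBN : Nmβ ≤ N := by
    rw [hNm]
    calc ((Finset.Icc 1 N).filter (fun i => h i ≤ ξmβ)).card
        ≤ (Finset.Icc 1 N).card := Finset.card_filter_le _ _
      _ = N := by rw [Nat.card_Icc]; omega
  have hAB : Ndotpα ≤ Nmβ := by
    rw [hNdot, hNm]
    apply Finset.card_le_card
    intro i hi
    rw [Finset.mem_filter] at hi ⊢
    exact ⟨hi.1, le_trans hi.2.le h2⟩
  -- characterization
  have hiffA : ∀ i, 1 ≤ i → i ≤ N → (h i < ξpα ↔ i ≤ Ndotpα) := by
    intro i hi1 hiN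
    constructor
    · intro hlt
      have : i ∈ Finset.Icc 1 Ndotpα :=
        hAset ▸ (Finset.mem_filter.mpr ⟨Finset.mem_Icc.mpr ⟨hi1, hiN⟩, hlt⟩)
      exact (Finset.mem_Icc.mp this).2
    · intro hle
      have : i ∈ (Finset.Icc 1 N).filter (fun i => h i < ξpα) := by
        rw [hAset]; exact Finset.mem_Icc.mpr ⟨hi1, hle⟩
      exact (Finset.mem_filter.mp this).2
  have hiffB : ∀ i, 1 ≤ i → i ≤ N → (h i ≤ ξmβ ↔ i ≤ Nmβ) := by
    intro i hi1 hiN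
    constructor
    · intro hlt
      have : i ∈ Finset.Icc 1 Nmβ :=
        hBset ▸ (Finset.mem_filter.mpr ⟨Finset.mem_Icc.mpr ⟨hi1, hiN⟩, hlt⟩)
      exact (Finset.mem_Icc.mp this).2
    · intro hle
      have : i ∈ (Finset.Icc 1 N).filter (fun i => h i ≤ ξmβ) := by
        rw [hBset]; exact Finset.mem_Icc.mpr ⟨hi1, hle⟩
      exact (Finset.mem_filter.mp this).2
  -- the indicator sum
  have hsum : (∑ i ∈ Finset.Icc 1 N, if ξpα ≤ h i ∧ h i ≤ ξmβ then h i else 0)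
      = ∑ i ∈ Finset.Ioc Ndotpα Nmβ, h i := by
    rw [← Finset.sum_filter]
    congr 1
    ext i
    simp only [Finset.mem_filter, Finset.mem_Icc, Finset.mem_Ioc]
    constructor
    · rintro ⟨⟨hi1, hiN⟩, hge, hle⟩
      refine ⟨?_, (hiffB i hi1 hiN).mp hle⟩
      by_contra hcon
      push_neg at hcon
      exact absurd ((hiffA i hi1 hiN).mpr hcon) (not_lt.mpr hge)
    · rintro ⟨hAi, hiB⟩
      have hi1 : 1 ≤ i := by omega
      have hiN : i ≤ N := le_trans hiB hBN
      refine ⟨⟨hi1, hiN⟩, ?_, (hiffB i hi1 hiN).mpr hiB⟩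
      exact not_lt.mp (fun hc => absurd ((hiffA i hi1 hiN).mp hc) (not_le.mpr hAi))
  have hNαNβ : Nα ≤ Nβ := by
    rw [hNα, hNβ]
    exact Nat.floor_le_floor (mul_le_mul_of_nonneg_right hαβ.le (Nat.cast_nonneg N))
  -- prefix sums
  set F : ℕ → ℝ := fun n => ∑ i ∈ Finset.Ioc 0 n, h i with hF
  have SF : ∀ a b : ℕ, a ≤ b → ∑ i ∈ Finset.Ioc a b, h i = F b - F a := by
    intro a b hab
    have := Finset.sum_Ioc_consecutive h (Nat.zero_le a) hab
    simp only [hF]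
    linarith
  rw [hsum, SF Nα Nβ hNαNβ, SF Ndotpα Nmβ hAB]
  rcases le_or_gt Ndotpα Nα with hcα | hcα
  · rcases lt_trichotomy Nmβ Nβ with hcβ | hcβ | hcβ
    · simp only [if_neg (not_lt.mpr hcα), if_pos hcα, if_pos hcβ, if_pos hcβ.le,
        if_neg (not_lt.mpr hcβ.le), zero_mul, mul_zero, one_mul, mul_one, sub_zero, zero_sub]
      rw [sum_sub_const h ξpα Ndotpα Nα hcα, sum_sub_const h ξpβ Nmβ Nβ hcβ.le,
        SF Ndotpα Nα hcα, SF Nmβ Nβ hcβ.le]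
      push_cast
      ring
    · subst hcβ
      simp only [lt_self_iff_false, if_neg (not_lt.mpr hcα), if_pos hcα, if_pos le_rfl,
        if_false, ite_false, zero_mul, mul_zero, one_mul, mul_one, sub_zero, zero_sub,
        Finset.Ioc_self, Finset.sum_empty]
      rw [sum_sub_const h ξpα Ndotpα Nα hcα, SF Ndotpα Nα hcα]
      push_cast
      ring
    · simp only [if_neg (not_lt.mpr hcα), if_pos hcα, if_neg (not_lt.mpr hcβ.le),
        if_neg (not_le.mpr hcβ), if_pos hcβ, zero_mul, mul_zero, one_mul, mul_one,
        sub_zero, zero_sub]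
      rw [sum_sub_const h ξpα Ndotpα Nα hcα, sum_sub_const h ξmβ Nβ Nmβ hcβ.le,
        SF Ndotpα Nα hcα, SF Nβ Nmβ hcβ.le]
      push_cast
      ring
  · rcases lt_trichotomy Nmβ Nβ with hcβ | hcβ | hcβ
    · simp only [if_pos hcα, if_neg (not_le.mpr hcα), if_pos hcβ, if_pos hcβ.le,
        if_neg (not_lt.mpr hcβ.le), zero_mul, mul_zero, one_mul, mul_one, sub_zero, zero_sub]
      rw [sum_sub_const h ξmα Nα Ndotpα hcα.le, sum_sub_const h ξpβ Nmβ Nβ hcβ.le,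
        SF Nα Ndotpα hcα.le, SF Nmβ Nβ hcβ.le]
      push_cast
      ring
    · subst hcβ
      simp only [lt_self_iff_false, if_pos hcα, if_neg (not_le.mpr hcα), if_pos le_rfl,
        if_false, ite_false, zero_mul, mul_zero, one_mul, mul_one, sub_zero, zero_sub,
        Finset.Ioc_self, Finset.sum_empty]
      rw [sum_sub_const h ξmα Nα Ndotpα hcα.le, SF Nα Ndotpα hcα.le]
      push_cast
      ring
    · simp only [if_pos hcα, if_neg (not_le.mpr hcα), if_neg (not_lt.mpr hcβ.le),
        if_neg (not_le.mpr hcβ), if_pos hcβ, zero_mul, mul_zero, one_mul, mul_one,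
        sub_zero, zero_sub]
      rw [sum_sub_const h ξmα Nα Ndotpα hcα.le, sum_sub_const h ξmβ Nβ Nmβ hcβ.le,
        SF Nα Ndotpα hcα.le, SF Nβ Nmβ hcβ.le]
      push_cast
      ring
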